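/- arXiv:2508.12959 — 3 statements merged into one kernel-verified Lean document; each statement's English description precedes it below -/
import Mathlib

section
/- With q = 2^(2s+1), q0 = 2^s, m = q - 2q0 + 1, and g = (q^3 - 2q^2 + q)/2: if ḡ is a natural number satisfying 2g - 2 - (q^2+1)(m-1) ≥ m(2ḡ - 2), then ḡ ≤ q0(q - 1). -/
theorem stmt_6 (s : ℕ) (hs : 1 ≤ s) (q q₀ m g : ℤ)
    (hq : q = 2 ^ (2 * s + 1)) (hq₀ : q₀ = 2 ^ s)
    (hm : m = q - 2 * q₀ + 1) (hg : 2 * g = q ^ 3 - 2 * q ^ 2 + q)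
    (gbar : ℤ) (hgbar : 0 ≤ gbar)
    (hineq : 2 * g - 2 - (q ^ 2 + 1) * (m - 1) ≥ m * (2 * gbar - 2)) :
    gbar ≤ q₀ * (q - 1) := by
  have hq2 : q = 2 * q₀ ^ 2 := by
    rw [hq, hq₀, ← pow_mul, mul_comm s 2, pow_succ, mul_comm]
  have h2 : (2 : ℤ) ≤ q₀ := by
    rw [hq₀]
    calc (2 : ℤ) = 2 ^ 1 := by norm_num
    _ ≤ 2 ^ s := by exact pow_le_pow_right₀ (by norm_num) hs
  subst hm hq2
  nlinarith [sq_nonneg q₀, sq_nonneg (q₀ - 1), mul_pos (by nlinarith : (0:ℤ) < 2*q₀^2 - 2*q₀ + 1) (by linarith : (0:ℤ) < q₀)]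
end

section
/- The numerical semigroup generated by q, q + q0, q + 2q0, q + 2q0 + 1, where q = 2^(2s+1) and q0 = 2^s, has genus q0(q - 1) (i.e., exactly q0(q-1) positive integers lie outside the semigroup). -/
/-!
Writing a sum of generators as `m q + t q₀ + d` (with `m` generators in total), the semigroup
consists of the numbers `m q + t q₀ + d` with `2 d ≤ t ≤ 2 m`. For `q = 2 q₀²`, fix the lower two
digits `t < 2 q₀`, `d < q₀` of `n` in the mixed radix `(q₀, 2 q₀)`, and let `m = n / q`. Carrying
shows that `n` lies in the semigroup exactly when `m ≥ ⌈t / 2⌉`, plus `q₀ + 1` when `t < 2 d`.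
Summing these thresholds over the `2 q₀²` digit pairs gives `q₀³ + (q₀ + 1) q₀ (q₀ - 1) = q₀ (q - 1)`.
-/

open Finset

abbrev suzukiSemigroup (q q₀ : ℕ) : AddSubmonoid ℕ :=
  AddSubmonoid.closure {q, q + q₀, q + 2 * q₀, q + 2 * q₀ + 1}

theorem mem_suzukiSemigroup_iff {q q₀ n : ℕ} :
    n ∈ suzukiSemigroup q q₀ ↔ ∃ m t d, t ≤ 2 * m ∧ 2 * d ≤ t ∧ m * q + t * q₀ + d = n := by
  constructor
  · intro h
    induction h using AddSubmonoid.closure_induction with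
    | mem x hx =>
      rcases hx with rfl | rfl | rfl | rfl
      · exact ⟨1, 0, 0, by omega, by omega, by ring⟩
      · exact ⟨1, 1, 0, by omega, by omega, by ring⟩
      · exact ⟨1, 2, 0, by omega, by omega, by ring⟩
      · exact ⟨1, 2, 1, by omega, by omega, by ring⟩
    | zero => exact ⟨0, 0, 0, le_rfl, le_rfl, by simp⟩
    | add x y _ _ hx hy =>
      obtain ⟨m, t, d, htm, hdt, rfl⟩ := hx
      obtain ⟨m', t', d', htm', hdt', rfl⟩ := hy
      exact ⟨m + m', t + t', d + d', by omega, by omega, by ring⟩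
  · rintro ⟨m, t, d, htm, hdt, rfl⟩
    obtain ⟨a, b, c, hb, rfl, rfl⟩ : ∃ a b c, b ≤ 1 ∧ m = a + b + c + d ∧ t = b + 2 * c + 2 * d :=
      ⟨m - (t + 1) / 2, (t - 2 * d) % 2, (t - 2 * d) / 2, by omega, by omega, by omega⟩
    have hgen : ∀ x ∈ ({q, q + q₀, q + 2 * q₀, q + 2 * q₀ + 1} : Set ℕ),
        ∀ k : ℕ, k • x ∈ suzukiSemigroup q q₀ :=
      fun x hx k => nsmul_mem (AddSubmonoid.subset_closure hx) k
    have hsum : (a + b + c + d) * q + (b + 2 * c + 2 * d) * q₀ + d =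
        a • q + b • (q + q₀) + c • (q + 2 * q₀) + d • (q + 2 * q₀ + 1) := by
      simp only [smul_eq_mul]; ring
    rw [hsum]
    refine add_mem (add_mem (add_mem ?_ ?_) ?_) ?_ <;> exact hgen _ (by simp) _


/-- The number of gaps `(m * (2 * q₀) + t) * q₀ + d` of `suzukiSemigroup (2 * q₀ ^ 2) q₀` with
fixed digits `t < 2 * q₀`, `d < q₀`. -/
def gapCount (q₀ t d : ℕ) : ℕ := (t + 1) / 2 + if t < 2 * d then q₀ + 1 else 0

/-- A representation `M q + T q₀ + D` with `D = d + q₀ α`, after carrying `α` and the overflow of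
`T` into the top digit `m`. -/
theorem gapCount_le_of_carry {q₀ m t d M T α : ℕ} (ht : t < 2 * q₀) (hTM : T ≤ 2 * M)
    (hDT : 2 * (d + q₀ * α) ≤ T) (hcarry : 2 * q₀ * M + T + α = 2 * q₀ * m + t) :
    gapCount q₀ t d ≤ m := by
  have hMm : M ≤ m := by nlinarith
  obtain ⟨β, rfl⟩ := Nat.exists_eq_add_of_le hMm
  have hT : T + α = 2 * (q₀ * β) + t := by linarith
  have hαβ : α ≤ β := by nlinarith
  unfold gapCount
  rcases Nat.lt_or_ge β 2 with hβ | hβ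
  · interval_cases β <;> interval_cases α <;> split_ifs <;> omega
  · have : 2 * q₀ ≤ q₀ * β := by nlinarith
    split_ifs <;> omega

theorem mem_suzukiSemigroup_iff_gapCount_le {q₀ m t d : ℕ} (ht : t < 2 * q₀) (hd : d < q₀) :
    (m * (2 * q₀) + t) * q₀ + d ∈ suzukiSemigroup (2 * q₀ ^ 2) q₀ ↔ gapCount q₀ t d ≤ m := by
  rw [mem_suzukiSemigroup_iff]
  constructor
  · rintro ⟨M, T, D, hTM, hDT, h⟩
    have hq₀ : 0 < q₀ := by omega
    have hsplit : D % q₀ + q₀ * (2 * q₀ * M + T + D / q₀) = M * (2 * q₀ ^ 2) + T * q₀ + D := by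
      nth_rw 3 [← Nat.mod_add_div D q₀]; ring
    have hsplit' : d + q₀ * (2 * q₀ * m + t) = (m * (2 * q₀) + t) * q₀ + d := by ring
    obtain ⟨hdiv, hmod⟩ := (Nat.div_mod_unique hq₀).2 ⟨hsplit.trans h, Nat.mod_lt D hq₀⟩
    obtain ⟨hdiv', hmod'⟩ := (Nat.div_mod_unique hq₀).2 ⟨hsplit', hd⟩
    refine gapCount_le_of_carry (α := D / q₀) ht hTM ?_ (hdiv.symm.trans hdiv')
    rwa [← hmod.symm.trans hmod', Nat.mod_add_div]
  · intro hm
    unfold gapCount at hm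
    split_ifs at hm
    · exact ⟨m - 1, t + 2 * q₀, d, by omega, by omega, by
        zify [show 1 ≤ m by omega]; ring⟩
    · exact ⟨m, t, d, by omega, by omega, by ring⟩

def mixedRadixEquiv (q₀ : ℕ) [NeZero q₀] : ℕ ≃ ℕ × Fin (2 * q₀) × Fin q₀ :=
  (Nat.divModEquiv q₀).trans <|
    ((Nat.divModEquiv (2 * q₀)).prodCongr (Equiv.refl _)).trans (Equiv.prodAssoc _ _ _)

theorem mixedRadixEquiv_symm_apply (q₀ : ℕ) [NeZero q₀] (m : ℕ) (t : Fin (2 * q₀)) (d : Fin q₀) :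
    (mixedRadixEquiv q₀).symm (m, t, d) = (m * (2 * q₀) + t) * q₀ + d :=
  rfl

theorem Nat.card_subtype_fst_lt {ι : Type*} [Fintype ι] (f : ι → ℕ) :
    Nat.card {x : ℕ × ι // x.1 < f x.2} = ∑ i, f i := by
  let e : {x : ℕ × ι // x.1 < f x.2} ≃ Σ i, Fin (f i) :=
    { toFun x := ⟨x.1.2, x.1.1, x.2⟩
      invFun y := ⟨(y.2, y.1), y.2.2⟩
      left_inv _ := rfl
      right_inv _ := rfl }
  rw [Nat.card_congr e, Nat.card_sigma]
  simp

theorem Finset.sum_range_two_mul_succ_div_two (k : ℕ) :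
    ∑ t ∈ range (2 * k), (t + 1) / 2 = k ^ 2 := by
  induction k with
  | zero => simp
  | succ k ih =>
    rw [show 2 * (k + 1) = 2 * k + 1 + 1 by ring, sum_range_succ, sum_range_succ, ih]
    rw [show (2 * k + 1) / 2 = k by omega, show (2 * k + 1 + 1) / 2 = k + 1 by omega]
    ring

theorem sum_range_gapCount {q₀ d : ℕ} (hd : d ≤ q₀) :
    ∑ t ∈ range (2 * q₀), gapCount q₀ t d = q₀ ^ 2 + 2 * d * (q₀ + 1) := by
  have hlt : (range (2 * q₀)).filter (· < 2 * d) = range (2 * d) := by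
    ext t; simp only [mem_filter, mem_range]; omega
  simp only [gapCount, sum_add_distrib, sum_range_two_mul_succ_div_two, sum_ite, sum_const_zero,
    sum_const, hlt, card_range, smul_eq_mul, add_zero]
  ring

theorem sum_gapCount (q₀ : ℕ) :
    ∑ x : Fin (2 * q₀) × Fin q₀, gapCount q₀ x.1 x.2 = q₀ * (2 * q₀ ^ 2 - 1) := by
  calc ∑ x : Fin (2 * q₀) × Fin q₀, gapCount q₀ x.1 x.2
      = ∑ d : Fin q₀, (q₀ ^ 2 + 2 * d * (q₀ + 1)) := by
        rw [Fintype.sum_prod_type_right]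
        refine sum_congr rfl fun d _ => ?_
        rw [Fin.sum_univ_eq_sum_range (gapCount q₀ · d), sum_range_gapCount d.2.le]
    _ = ∑ d ∈ range q₀, (q₀ ^ 2 + 2 * d * (q₀ + 1)) :=
        Fin.sum_univ_eq_sum_range (fun d => q₀ ^ 2 + 2 * d * (q₀ + 1)) q₀
    _ = q₀ * q₀ ^ 2 + (∑ d ∈ range q₀, d) * 2 * (q₀ + 1) := by
        rw [sum_add_distrib, sum_const, card_range, smul_eq_mul, sum_mul, sum_mul]
        exact congrArg _ (sum_congr rfl fun d _ => by ring)
    _ = q₀ * (2 * q₀ ^ 2 - 1) := by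
        rw [sum_range_id_mul_two]
        rcases Nat.eq_zero_or_pos q₀ with rfl | hq₀
        · rfl
        · zify [show 1 ≤ q₀ from hq₀, show 1 ≤ 2 * q₀ ^ 2 by nlinarith]
          ring

theorem card_not_mem_suzukiSemigroup {q₀ : ℕ} (hq₀ : 0 < q₀) :
    Nat.card {n : ℕ // n ∉ suzukiSemigroup (2 * q₀ ^ 2) q₀} = q₀ * (2 * q₀ ^ 2 - 1) := by
  have := NeZero.of_pos hq₀
  calc Nat.card {n : ℕ // n ∉ suzukiSemigroup (2 * q₀ ^ 2) q₀}
      = Nat.card {x : ℕ × Fin (2 * q₀) × Fin q₀ // x.1 < gapCount q₀ x.2.1 x.2.2} := by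
        refine Nat.card_congr ((mixedRadixEquiv q₀).symm.subtypeEquivOfSubtype.symm.trans
          (Equiv.subtypeEquivRight fun ⟨m, t, d⟩ => ?_))
        rw [mixedRadixEquiv_symm_apply, mem_suzukiSemigroup_iff_gapCount_le t.2 d.2, not_le]
    _ = q₀ * (2 * q₀ ^ 2 - 1) := (Nat.card_subtype_fst_lt _).trans (sum_gapCount q₀)

theorem stmt_11_general (s : ℕ) (q q₀ : ℕ)
    (hq : q = 2 ^ (2 * s + 1)) (hq₀ : q₀ = 2 ^ s) :
    Nat.card {n : ℕ //
        n ∉ AddSubmonoid.closure ({q, q + q₀, q + 2 * q₀, q + 2 * q₀ + 1} : Set ℕ)} =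
      q₀ * (q - 1) := by
  have hq' : q = 2 * q₀ ^ 2 := by rw [hq, hq₀]; ring
  subst hq'
  exact card_not_mem_suzukiSemigroup (by rw [hq₀]; positivity)

theorem stmt_11 (s : ℕ) (hs : 1 ≤ s) (q q₀ : ℕ)
    (hq : q = 2 ^ (2 * s + 1)) (hq₀ : q₀ = 2 ^ s) :
    Nat.card {n : ℕ //
        n ∉ AddSubmonoid.closure ({q, q + q₀, q + 2 * q₀, q + 2 * q₀ + 1} : Set ℕ)} =
      q₀ * (q - 1) :=
  stmt_11_general s q q₀ hq hq₀
end

section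
/- The numerical semigroup generated by q^2 - 2q0q + q, q^2 - q0q + q0, q^2 - q + 2q0, q^2, q^2 + 1, where q = 2^(2s+1) and q0 = 2^s, has genus (q^3 - 2q^2 + q)/2. -/
/-!
Let `m = q² - 2q₀q + q`, the smallest generator. The relations
`q₀(q² + 1) = q₀m + (q² - q₀q + q₀)`, `2(q² - q₀q + q₀) = m + (q² - q + 2q₀)`,
`q₀(q² - q + 2q₀) = (q₀ + 1)m` and `(q - 2q₀ + 1)q² = qm` reduce every element of the semigroup
to a multiple of `m` plus one of the `m` numbers
`b(q² - q₀q + q₀) + c(q² - q + 2q₀) + dq² + e(q² + 1)` with `b < 2`, `c < q₀`, `d < q - 2q₀ + 1`,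
`e < q₀`. Since `q²` and `q² + 1` both lie in the semigroup, every residue class modulo `m` meets
it, so these `m` numbers are pairwise incongruent: they form the Apéry set with respect to `m`,
and Selmer's formula `m(2g + m) = 2 ∑ w + m` turns their sum into the genus `g`.
-/

open Finset

namespace NumericalSemigroup

variable {ι : Type*} {S : AddSubmonoid ℕ} {m : ℕ} {T : Finset ι} {w : ι → ℕ}

theorem exists_mem_mod_eq_of_mem_of_succ_mem {d : ℕ} (hd : d ∈ S) (hd' : d + 1 ∈ S)
    {r : ℕ} (hr : r < m) : ∃ n ∈ S, n % m = r := by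
  refine ⟨r • (d + 1) + (m - r) • d, add_mem (nsmul_mem hd' r) (nsmul_mem hd _), ?_⟩
  have : r • (d + 1) + (m - r) • d = r + m * d := by
    rw [smul_eq_mul, smul_eq_mul, ← Nat.sub_add_cancel hr.le]; simp; ring
  rw [this, Nat.add_mul_mod_self_left, Nat.mod_eq_of_lt hr]

theorem pos_of_bijOn (hS : ∀ n, n ∈ S ↔ ∃ t ∈ T, ∃ k, n = w t + m * k)
    (hbij : Set.BijOn (fun t => w t % m) T (range m)) : 0 < m := by
  obtain ⟨t, ht, -⟩ := (hS 0).1 S.zero_mem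
  exact Nat.pos_of_ne_zero fun h => by simpa [h] using hbij.mapsTo ht

theorem bijOn_mod_of_card_le (hS : ∀ n, n ∈ S ↔ ∃ t ∈ T, ∃ k, n = w t + m * k)
    (hres : ∀ r < m, ∃ n ∈ S, n % m = r) (hcard : #T ≤ m) :
    Set.BijOn (fun t => w t % m) T (range m) := by
  have hm : 0 < m := by
    obtain ⟨t, ht, -⟩ := (hS 0).1 S.zero_mem
    exact hcard.trans_lt' (card_pos.2 ⟨t, ht⟩)
  have maps : Set.MapsTo (fun t => w t % m) T (range m) := fun t _ =>
    mem_range.2 (Nat.mod_lt _ hm)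
  have surj : Set.SurjOn (fun t => w t % m) T (range m) := by
    intro r hr
    obtain ⟨n, hn, rfl⟩ := hres r (mem_range.1 hr)
    obtain ⟨t, ht, k, rfl⟩ := (hS n).1 hn
    exact ⟨t, ht, by simp⟩
  exact ⟨maps, injOn_of_surjOn_of_card_le _ maps surj (by simpa using hcard), surj⟩

theorem notMem_iff_exists_lt_modEq (hS : ∀ n, n ∈ S ↔ ∃ t ∈ T, ∃ k, n = w t + m * k)
    (hbij : Set.BijOn (fun t => w t % m) T (range m)) {n : ℕ} :
    n ∉ S ↔ ∃ t ∈ T, n < w t ∧ n ≡ w t [MOD m] := by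
  constructor
  · intro hn
    obtain ⟨t, ht, hmod⟩ := hbij.surjOn (mem_range.2 (Nat.mod_lt n (pos_of_bijOn hS hbij)))
    refine ⟨t, ht, not_le.1 fun hle => hn ?_, hmod.symm⟩
    obtain ⟨k, hk⟩ := (Nat.modEq_iff_dvd' hle).1 hmod
    exact (hS n).2 ⟨t, ht, k, by omega⟩
  · rintro ⟨t, ht, hlt, hmod⟩ hn
    obtain ⟨t', ht', k, rfl⟩ := (hS _).1 hn
    obtain rfl : t' = t := hbij.injOn ht' ht (by simpa [Nat.ModEq] using hmod)
    omega

theorem card_notMem_eq_sum_div (hS : ∀ n, n ∈ S ↔ ∃ t ∈ T, ∃ k, n = w t + m * k)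
    (hbij : Set.BijOn (fun t => w t % m) T (range m)) :
    Nat.card {n // n ∉ S} = ∑ t ∈ T, w t / m := by
  set G := T.biUnion fun t => {n ∈ range (w t) | n ≡ w t [MOD m]}
  have hG : ∀ n, n ∉ S ↔ n ∈ G := fun n => by simp [G, notMem_iff_exists_lt_modEq hS hbij]
  rw [Nat.card_congr (Equiv.subtypeEquivRight hG), Nat.card_eq_fintype_card, Fintype.card_coe,
    card_biUnion]
  · refine sum_congr rfl fun t _ => ?_
    rw [← Nat.count_eq_card_filter_range, Nat.count_modEq_card _ (pos_of_bijOn hS hbij)]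
    simp
  · intro t ht t' ht' hne
    refine disjoint_left.2 fun n hn hn' => hne (hbij.injOn ht ht' ?_)
    simp only [mem_filter] at hn hn'
    exact hn.2.symm.trans hn'.2

theorem selmer_formula (hS : ∀ n, n ∈ S ↔ ∃ t ∈ T, ∃ k, n = w t + m * k)
    (hbij : Set.BijOn (fun t => w t % m) T (range m)) :
    m * (2 * Nat.card {n // n ∉ S} + m) = 2 * ∑ t ∈ T, w t + m := by
  have hmod : ∑ t ∈ T, w t % m = ∑ r ∈ range m, r :=
    sum_nbij _ hbij.mapsTo hbij.injOn hbij.surjOn fun _ _ => rfl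
  have hgauss := sum_range_id_mul_two m
  have hdiv : ∑ t ∈ T, (m * (w t / m) + w t % m) = ∑ t ∈ T, w t :=
    sum_congr rfl fun t _ => Nat.div_add_mod _ _
  rw [sum_add_distrib, ← mul_sum, hmod] at hdiv
  rw [card_notMem_eq_sum_div hS hbij, ← hdiv]
  rcases m with _ | m
  · simp
  · simp only [Nat.add_sub_cancel] at hgauss
    linear_combination hgauss.symm

end NumericalSemigroup

namespace Skabelund

open NumericalSemigroup

variable (r : ℕ)

-- With `q₀ = r + 1` and `q = 2q₀²`, `g₁, …, g₅` are the generators in the order of the statement,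
-- written without subtraction, and `e r = q - 2q₀ + 1`.
def e : ℕ := 2 * r * (r + 1) + 1

def g₁ : ℕ := 2 * (r + 1) ^ 2 * e r
def g₂ : ℕ := (r + 1) * (4 * r ^ 3 + 10 * r ^ 2 + 8 * r + 3)
def g₃ : ℕ := (r + 1) * (4 * r ^ 3 + 12 * r ^ 2 + 10 * r + 4)
def g₄ : ℕ := 4 * (r + 1) ^ 4
def g₅ : ℕ := g₄ r + 1

def semigroup : AddSubmonoid ℕ := AddSubmonoid.closure {g₁ r, g₂ r, g₃ r, g₄ r, g₅ r}

def box : Finset (ℕ × ℕ × ℕ × ℕ) := range 2 ×ˢ range (r + 1) ×ˢ range (e r) ×ˢ range (r + 1)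

def apery (t : ℕ × ℕ × ℕ × ℕ) : ℕ :=
  t.1 * g₂ r + t.2.1 * g₃ r + t.2.2.1 * g₄ r + t.2.2.2 * g₅ r

theorem g₅_carry : (r + 1) * g₅ r = (r + 1) * g₁ r + g₂ r := by
  simp only [g₁, g₂, g₄, g₅, e]; ring

theorem g₂_carry : 2 * g₂ r = g₁ r + g₃ r := by
  simp only [g₁, g₂, g₃, e]; ring

theorem g₃_carry : (r + 1) * g₃ r = (r + 2) * g₁ r := by
  simp only [g₁, g₃, e]; ring

theorem g₄_carry : e r * g₄ r = 2 * (r + 1) ^ 2 * g₁ r := by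
  simp only [g₁, g₄]; ring

theorem mem_semigroup_iff {n : ℕ} : n ∈ semigroup r ↔
    ∃ x y z u v : ℕ, n = x * g₁ r + (y * g₂ r + (z * g₃ r + (u * g₄ r + v * g₅ r))) := by
  simp [semigroup, ← Submodule.span_nat_eq_addSubmonoidClosure, Submodule.mem_span_insert,
    Submodule.mem_span_singleton]

theorem e_pos : 0 < e r := Nat.succ_pos _

theorem exists_mem_box (x y z u v : ℕ) : ∃ t ∈ box r, ∃ k,
    x * g₁ r + (y * g₂ r + (z * g₃ r + (u * g₄ r + v * g₅ r))) = apery r t + g₁ r * k := by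
  have divMod : ∀ n d, 0 < d → ∃ q s, s < d ∧ d * q + s = n :=
    fun n d hd => ⟨n / d, n % d, Nat.mod_lt _ hd, Nat.div_add_mod _ _⟩
  obtain ⟨a, v', hv', hv⟩ := divMod v (r + 1) r.succ_pos
  obtain ⟨b, y', hy', hy⟩ := divMod (y + a) 2 two_pos
  obtain ⟨c, z', hz', hz⟩ := divMod (z + b) (r + 1) r.succ_pos
  obtain ⟨d, u', hu', hu⟩ := divMod u (e r) (e_pos r)
  refine ⟨(y', z', u', v'), by simp [box, *],
    x + (r + 1) * a + b + (r + 2) * c + 2 * (r + 1) ^ 2 * d, ?_⟩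
  have h₅ := g₅_carry r
  have h₂ := g₂_carry r
  have h₃ := g₃_carry r
  have h₄ := g₄_carry r
  subst hv hu
  simp only [apery]
  zify at *
  linear_combination
    a * h₅ + b * h₂ + c * h₃ + d * h₄ - (g₂ r : ℤ) * hy - (g₃ r : ℤ) * hz

theorem mem_semigroup_iff_exists_mem_box {n : ℕ} :
    n ∈ semigroup r ↔ ∃ t ∈ box r, ∃ k, n = apery r t + g₁ r * k := by
  rw [mem_semigroup_iff]
  constructor
  · rintro ⟨x, y, z, u, v, rfl⟩
    exact exists_mem_box r x y z u v
  · rintro ⟨⟨y, z, u, v⟩, -, k, rfl⟩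
    exact ⟨k, y, z, u, v, by simp only [apery]; ring⟩

theorem card_box : #(box r) = g₁ r := by
  simp only [box, card_product, card_range, g₁]; ring

theorem g₄_mem : g₄ r ∈ semigroup r := AddSubmonoid.subset_closure (by simp)

theorem g₄_add_one_mem : g₄ r + 1 ∈ semigroup r := AddSubmonoid.subset_closure (by simp [g₅])

theorem two_mul_sum_apery :
    2 * ∑ t ∈ box r, apery r t =
      g₁ r * (g₂ r + r * g₃ r + 2 * r * (r + 1) * g₄ r + r * g₅ r) := by
  have h₁ := sum_range_id_mul_two (r + 1)
  have h₂ := sum_range_id_mul_two (e r)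
  rw [Nat.add_sub_cancel] at h₁
  rw [show e r - 1 = 2 * r * (r + 1) from rfl] at h₂
  simp only [box, apery, sum_product, sum_add_distrib, sum_const, card_product, card_range,
    smul_eq_mul]
  simp only [← sum_mul, ← mul_sum, show ∑ i ∈ range 2, i = 1 from rfl, g₁]
  linear_combination (2 * e r * (r + 1) * (g₃ r + g₅ r)) * h₁ + (2 * (r + 1) ^ 2 * g₄ r) * h₂

theorem g₁_pos : 0 < g₁ r := by unfold g₁ e; positivity

theorem card_notMem_semigroup :
    Nat.card {n // n ∉ semigroup r} = (r + 1) ^ 2 * (2 * r ^ 2 + 4 * r + 1) ^ 2 := by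
  have hS : ∀ n, n ∈ semigroup r ↔ ∃ t ∈ box r, ∃ k, n = apery r t + g₁ r * k :=
    fun _ => mem_semigroup_iff_exists_mem_box r
  have hbij := bijOn_mod_of_card_le hS
    (fun _ => exists_mem_mod_eq_of_mem_of_succ_mem (g₄_mem r) (g₄_add_one_mem r)) (card_box r).le
  have selmer := selmer_formula hS hbij
  rw [two_mul_sum_apery, ← mul_add_one] at selmer
  have := Nat.eq_of_mul_eq_mul_left (g₁_pos r) selmer
  simp only [g₁, g₂, g₃, g₅, g₄, e] at this
  linarith

theorem generators_eq {q : ℕ} (hq : q = 2 * (r + 1) ^ 2) :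
    ({q ^ 2 - 2 * (r + 1) * q + q, q ^ 2 - (r + 1) * q + (r + 1), q ^ 2 - q + 2 * (r + 1),
      q ^ 2, q ^ 2 + 1} : Set ℕ) = {g₁ r, g₂ r, g₃ r, g₄ r, g₅ r} := by
  have h₁ : q ^ 2 - 2 * (r + 1) * q = 4 * (r + 1) ^ 3 * r :=
    Nat.sub_eq_of_eq_add (by rw [hq]; ring)
  have h₂ : q ^ 2 - (r + 1) * q = 2 * (r + 1) ^ 3 * (2 * r + 1) :=
    Nat.sub_eq_of_eq_add (by rw [hq]; ring)
  have h₃ : q ^ 2 - q = 2 * (r + 1) ^ 2 * (2 * r ^ 2 + 4 * r + 1) :=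
    Nat.sub_eq_of_eq_add (by rw [hq]; ring)
  rw [h₁, h₂, h₃, hq]
  simp only [g₁, g₂, g₃, g₄, g₅, e]
  ring_nf

theorem genus_eq {q : ℕ} (hq : q = 2 * (r + 1) ^ 2) :
    (q ^ 3 - 2 * q ^ 2 + q) / 2 = (r + 1) ^ 2 * (2 * r ^ 2 + 4 * r + 1) ^ 2 := by
  have h : q ^ 3 - 2 * q ^ 2 = 8 * (r + 1) ^ 4 * (r ^ 2 + 2 * r) :=
    Nat.sub_eq_of_eq_add (by rw [hq]; ring)
  rw [h, hq, show 8 * (r + 1) ^ 4 * (r ^ 2 + 2 * r) + 2 * (r + 1) ^ 2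
    = 2 * ((r + 1) ^ 2 * (2 * r ^ 2 + 4 * r + 1) ^ 2) by ring]
  exact Nat.mul_div_cancel_left _ two_pos

end Skabelund

theorem stmt_12_general (s : ℕ) (q q₀ : ℕ)
    (hq : q = 2 ^ (2 * s + 1)) (hq₀ : q₀ = 2 ^ s) :
    Nat.card {n : ℕ //
        n ∉ AddSubmonoid.closure
          ({q ^ 2 - 2 * q₀ * q + q, q ^ 2 - q₀ * q + q₀, q ^ 2 - q + 2 * q₀,
            q ^ 2, q ^ 2 + 1} : Set ℕ)} =
      (q ^ 3 - 2 * q ^ 2 + q) / 2 := by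
  obtain ⟨r, rfl⟩ : ∃ r, q₀ = r + 1 :=
    ⟨q₀ - 1, by rw [hq₀, Nat.sub_add_cancel Nat.one_le_two_pow]⟩
  have hq' : q = 2 * (r + 1) ^ 2 := by rw [hq, hq₀, pow_succ, mul_comm 2 s, pow_mul]; ring
  rw [Skabelund.generators_eq r hq', Skabelund.genus_eq r hq']
  exact Skabelund.card_notMem_semigroup r

theorem stmt_12 (s : ℕ) (hs : 1 ≤ s) (q q₀ : ℕ)
    (hq : q = 2 ^ (2 * s + 1)) (hq₀ : q₀ = 2 ^ s) :
    Nat.card {n : ℕ //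
        n ∉ AddSubmonoid.closure
          ({q ^ 2 - 2 * q₀ * q + q, q ^ 2 - q₀ * q + q₀, q ^ 2 - q + 2 * q₀,
            q ^ 2, q ^ 2 + 1} : Set ℕ)} =
      (q ^ 3 - 2 * q ^ 2 + q) / 2 :=
  stmt_12_general s q q₀ hq hq₀
end
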